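/- arXiv:2601.00712 — 2 statements merged into one kernel-verified Lean document; each statement's English description precedes it below -/
import Mathlib

section
/- For probability distributions π and μ on a finite alphabet Y with π(y) > 0 and μ(y) > 0 for all y, the minimum over all probability distributions Q on Y of D(Q‖μ) + D(Q‖π) equals 2B(π,μ), where B(π,μ) = −log(Σ_y √(π(y)μ(y))) is the Bhattacharyya distance, and the minimum is attained at the normalized geometric mean Q*(y) = √(π(y)μ(y)) / Σ_{y'} √(π(y')μ(y')). -/
def IsPMF {Y : Type*} [Fintype Y] (p : Y → ℝ) : Prop :=
  (∀ y, 0 ≤ p y) ∧ ∑ y, p y = 1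

/-- Kullback–Leibler divergence (base-2 logarithm), with the convention `0 log 0 = 0`. -/
noncomputable def KL {Y : Type*} [Fintype Y] (Q P : Y → ℝ) : ℝ :=
  ∑ y, Q y * Real.logb 2 (Q y / P y)

/-- Bhattacharyya distance (base-2 logarithm). -/
noncomputable def Bhatt {Y : Type*} [Fintype Y] (π μ : Y → ℝ) : ℝ :=
  - Real.logb 2 (∑ y, Real.sqrt (π y * μ y))

lemma gibbs_log {Y : Type*} [Fintype Y] (Q P : Y → ℝ) (hQ0 : ∀ y, 0 ≤ Q y)
    (hQ1 : ∑ y, Q y = 1) (hP : ∀ y, 0 < P y) (hP1 : ∑ y, P y = 1) :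
    0 ≤ ∑ y, Q y * Real.log (Q y / P y) := by
  have h : ∑ y, Q y * Real.log (P y / Q y) ≤ 0 := by
    have hle : ∀ y ∈ Finset.univ, Q y * Real.log (P y / Q y) ≤ P y - Q y := by
      intro y _
      rcases eq_or_lt_of_le (hQ0 y) with h0 | h0
      · rw [← h0]; simpa using (hP y).le
      · have hx : 0 < P y / Q y := div_pos (hP y) h0
        calc Q y * Real.log (P y / Q y) ≤ Q y * (P y / Q y - 1) :=
              mul_le_mul_of_nonneg_left (Real.log_le_sub_one_of_pos hx) h0.le
          _ = P y - Q y := by field_simp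
    calc ∑ y, Q y * Real.log (P y / Q y) ≤ ∑ y, (P y - Q y) := Finset.sum_le_sum hle
      _ = 0 := by rw [Finset.sum_sub_distrib, hQ1, hP1]; ring
  have heq : ∑ y, Q y * Real.log (Q y / P y) = - ∑ y, Q y * Real.log (P y / Q y) := by
    rw [← Finset.sum_neg_distrib]
    refine Finset.sum_congr rfl fun y _ => ?_
    have : Real.log (Q y / P y) = - Real.log (P y / Q y) := by
      rw [← Real.log_inv, inv_div]
    rw [this]; ring
  linarith

/-- `min_Q D(Q‖μ) + D(Q‖π) = 2 B(π,μ)`, attained at the normalized geometric mean. -/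
theorem min_sum_KL_eq_twice_bhatt {Y : Type*} [Fintype Y] [Nonempty Y]
    (π μ : Y → ℝ) (hπ : IsPMF π) (hμ : IsPMF μ)
    (hπpos : ∀ y, 0 < π y) (hμpos : ∀ y, 0 < μ y) :
    (∀ Q : Y → ℝ, IsPMF Q → 2 * Bhatt π μ ≤ KL Q μ + KL Q π) ∧
      (KL (fun y => Real.sqrt (π y * μ y) / ∑ y', Real.sqrt (π y' * μ y')) μ +
        KL (fun y => Real.sqrt (π y * μ y) / ∑ y', Real.sqrt (π y' * μ y')) π
        = 2 * Bhatt π μ) := by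
  set S : ℝ := ∑ y', Real.sqrt (π y' * μ y') with hS
  have hSpos : 0 < S := by
    apply Finset.sum_pos (fun y _ => Real.sqrt_pos.mpr (mul_pos (hπpos y) (hμpos y)))
    exact Finset.univ_nonempty
  set Qs : Y → ℝ := fun y => Real.sqrt (π y * μ y) / S with hQsdef
  have hQspos : ∀ y, 0 < Qs y := fun y =>
    div_pos (Real.sqrt_pos.mpr (mul_pos (hπpos y) (hμpos y))) hSpos
  have hQs1 : ∑ y, Qs y = 1 := by
    rw [hQsdef]
    rw [← Finset.sum_div]
    exact div_self hSpos.ne'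
  have h2 : Real.log 2 ≠ 0 := (Real.log_pos (by norm_num)).ne'
  have key : ∀ Q : Y → ℝ, (∀ y, 0 ≤ Q y) → (∑ y, Q y = 1) →
      KL Q μ + KL Q π = 2 * KL Q Qs + 2 * Bhatt π μ := by
    intro Q hQ0 hQ1
    have hterm : ∀ y, Q y * Real.logb 2 (Q y / μ y) + Q y * Real.logb 2 (Q y / π y)
        = 2 * (Q y * Real.logb 2 (Q y / Qs y)) + Q y * (2 * Bhatt π μ) := by
      intro y
      rcases eq_or_lt_of_le (hQ0 y) with h0 | h0
      · rw [← h0]; ring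
      · have hμy := hμpos y; have hπy := hπpos y
        have hQsy := hQspos y
        have hlogQs : Real.log (Qs y) = Real.log (π y * μ y) / 2 - Real.log S := by
          rw [hQsdef]
          rw [Real.log_div (Real.sqrt_pos.mpr (mul_pos hπy hμy)).ne' hSpos.ne',
              Real.log_sqrt (mul_pos hπy hμy).le]
        simp only [Real.logb, Bhatt, ← hS]
        rw [Real.log_div h0.ne' hμy.ne', Real.log_div h0.ne' hπy.ne',
            Real.log_div h0.ne' hQsy.ne', hlogQs, Real.log_mul hπy.ne' hμy.ne']
        field_simp
        ring
    calc KL Q μ + KL Q π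
        = ∑ y, (Q y * Real.logb 2 (Q y / μ y) + Q y * Real.logb 2 (Q y / π y)) :=
          (Finset.sum_add_distrib).symm
      _ = ∑ y, (2 * (Q y * Real.logb 2 (Q y / Qs y)) + Q y * (2 * Bhatt π μ)) :=
          Finset.sum_congr rfl fun y _ => hterm y
      _ = 2 * KL Q Qs + 2 * Bhatt π μ := by
          rw [Finset.sum_add_distrib, ← Finset.mul_sum, ← Finset.sum_mul, hQ1, one_mul, KL]
  constructor
  · intro Q hQ
    have hKLnn : 0 ≤ KL Q Qs := by
      have := gibbs_log Q Qs hQ.1 hQ.2 hQspos hQs1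
      have hrw : KL Q Qs = (∑ y, Q y * Real.log (Q y / Qs y)) / Real.log 2 := by
        simp only [KL, Real.logb, Finset.sum_div]
        exact Finset.sum_congr rfl fun y _ => by ring
      rw [hrw]
      positivity
    have := key Q hQ.1 hQ.2
    linarith
  · have hKLQsQs : KL Qs Qs = 0 := by
      simp only [KL]
      apply Finset.sum_eq_zero
      intro y _
      rw [div_self (hQspos y).ne', Real.logb_one, mul_zero]
    have := key Qs (fun y => (hQspos y).le) hQs1
    rw [hKLQsQs] at this
    linarith
end

section
/- Let Y be a finite set, π a strictly positive probability distribution on Y with π_min = min_y π(y), and let 0 < ε < π_min. For any probability distributions P₁, P₂ and Q on Y with Q(y) ∈ [π(y)−ε, π(y)+ε] for all y and P₁, P₂ strictly positive, we have D(P₂‖Q) − D(P₁‖Q) ≤ D(P₂‖π) − D(P₁‖π) + 2ε/(π_min − ε). -/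
/-- Kullback–Leibler divergence with natural logarithm, convention `0 log 0 = 0`. -/
noncomputable def KLn {Y : Type*} [Fintype Y] (Q P : Y → ℝ) : ℝ :=
  ∑ y, Q y * Real.log (Q y / P y)

/-!
Since `log (P/Q) - log (P/π) = log (π/Q)`, the difference `D(P‖Q) - D(P‖π)` is the `P`-average of
`log (π/Q)`. For `|Q - π| ≤ ε < π_min ≤ π` the bounds `1 - x⁻¹ ≤ log x ≤ x - 1` give
`|log (π/Q)| ≤ ε / (π_min - ε)`, so each of the two averages deviates from `0` by at most that much.
-/

open Finset

theorem Real.abs_log_div_le_of_abs_sub_le {a q ε m : ℝ} (hma : m ≤ a) (hεm : ε < m)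
    (hqa : |q - a| ≤ ε) : |Real.log (a / q)| ≤ ε / (m - ε) := by
  obtain ⟨hlo, hhi⟩ := abs_le.mp hqa
  have hε : 0 ≤ ε := (abs_nonneg _).trans hqa
  have hq : m - ε ≤ q := by linarith
  have hmε : 0 < m - ε := by linarith
  have ha : 0 < a := by linarith
  have hdiv : 0 < a / q := div_pos ha (hmε.trans_le hq)
  rw [abs_le]
  constructor
  · calc -(ε / (m - ε)) ≤ -(ε / a) := by
          gcongr
          linarith
      _ ≤ 1 - (a / q)⁻¹ := by
          rw [inv_div, one_sub_div ha.ne', ← neg_div]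
          gcongr
          linarith
      _ ≤ Real.log (a / q) := Real.one_sub_inv_le_log_of_pos hdiv
  · calc Real.log (a / q) ≤ a / q - 1 := Real.log_le_sub_one_of_pos hdiv
      _ = (a - q) / q := by rw [div_sub_one (hmε.trans_le hq).ne']
      _ ≤ ε / (m - ε) := div_le_div₀ hε (by linarith) hmε hq

theorem KLn_sub_KLn {Y : Type*} [Fintype Y] (P Q π : Y → ℝ) (hQ : ∀ y, Q y ≠ 0)
    (hπ : ∀ y, π y ≠ 0) : KLn P Q - KLn P π = ∑ y, P y * Real.log (π y / Q y) := by
  rw [KLn, KLn, ← sum_sub_distrib]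
  refine sum_congr rfl fun y _ => ?_
  rcases eq_or_ne (P y) 0 with hP | hP
  · simp [hP]
  · rw [← mul_sub, Real.log_div hP (hQ y), Real.log_div hP (hπ y), Real.log_div (hπ y) (hQ y)]
    ring

theorem IsPMF.abs_sum_mul_le {Y : Type*} [Fintype Y] {P f : Y → ℝ} {c : ℝ} (hP : IsPMF P)
    (hf : ∀ y, |f y| ≤ c) : |∑ y, P y * f y| ≤ c :=
  calc |∑ y, P y * f y| ≤ ∑ y, P y * |f y| := by
        refine (abs_sum_le_sum_abs _ _).trans_eq (sum_congr rfl fun y _ => ?_)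
        rw [abs_mul, abs_of_nonneg (hP.1 y)]
    _ ≤ ∑ y, P y * c := sum_le_sum fun y _ => mul_le_mul_of_nonneg_left (hf y) (hP.1 y)
    _ = c := by rw [← sum_mul, hP.2, one_mul]

theorem KLn_sub_KLn_sub_le {Y : Type*} [Fintype Y] {π Q P₁ P₂ : Y → ℝ} {c : ℝ}
    (hP₁ : IsPMF P₁) (hP₂ : IsPMF P₂) (hQ : ∀ y, Q y ≠ 0) (hπ : ∀ y, π y ≠ 0)
    (hlog : ∀ y, |Real.log (π y / Q y)| ≤ c) :
    KLn P₂ Q - KLn P₁ Q - (KLn P₂ π - KLn P₁ π) ≤ 2 * c := by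
  have h₁ := abs_le.mp (hP₁.abs_sum_mul_le hlog)
  have h₂ := abs_le.mp (hP₂.abs_sum_mul_le hlog)
  rw [← KLn_sub_KLn P₁ Q π hQ hπ] at h₁
  rw [← KLn_sub_KLn P₂ Q π hQ hπ] at h₂
  linarith [h₁.1, h₂.2]

theorem KL_diff_stability_general {Y : Type*} [Fintype Y] [Nonempty Y]
    (π Q P₁ P₂ : Y → ℝ)
    (hP₁ : IsPMF P₁) (hP₂ : IsPMF P₂)
    (ε : ℝ)
    (hεlt : ε < Finset.univ.inf' Finset.univ_nonempty π)
    (hQball : ∀ y, |Q y - π y| ≤ ε) :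
    KLn P₂ Q - KLn P₁ Q ≤ KLn P₂ π - KLn P₁ π +
      2 * ε / (Finset.univ.inf' Finset.univ_nonempty π - ε) := by
  set m := univ.inf' univ_nonempty π
  have hm : ∀ y, m ≤ π y := fun y => inf'_le _ (mem_univ y)
  have hε : 0 ≤ ε := (abs_nonneg _).trans (hQball (Classical.arbitrary Y))
  have hπ : ∀ y, π y ≠ 0 := fun y => (by linarith [hm y] : 0 < π y).ne'
  have hQ : ∀ y, Q y ≠ 0 := fun y => by
    have := (abs_le.mp (hQball y)).1
    exact (by linarith [hm y] : 0 < Q y).ne'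
  have hdiff := KLn_sub_KLn_sub_le hP₁ hP₂ hQ hπ fun y =>
    Real.abs_log_div_le_of_abs_sub_le (hm y) hεlt (hQball y)
  rw [mul_div_assoc]
  linarith

/-- Stability of divergence differences when the reference distribution `Q` is
within an `ℓ∞`-ball of radius `ε < π_min` around `π`. -/
theorem KL_diff_stability {Y : Type*} [Fintype Y] [Nonempty Y]
    (π Q P₁ P₂ : Y → ℝ)
    (hπ : IsPMF π) (hQ : IsPMF Q) (hP₁ : IsPMF P₁) (hP₂ : IsPMF P₂)
    (hπpos : ∀ y, 0 < π y)
    (hP₁pos : ∀ y, 0 < P₁ y) (hP₂pos : ∀ y, 0 < P₂ y)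
    (ε : ℝ) (hε : 0 < ε)
    (hεlt : ε < Finset.univ.inf' Finset.univ_nonempty π)
    (hQball : ∀ y, |Q y - π y| ≤ ε) :
    KLn P₂ Q - KLn P₁ Q ≤ KLn P₂ π - KLn P₁ π +
      2 * ε / (Finset.univ.inf' Finset.univ_nonempty π - ε) :=
  KL_diff_stability_general π Q P₁ P₂ hP₁ hP₂ ε hεlt hQball
end
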